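/- Let {γ_n}_{n≥0} be a sequence of real numbers with inf_{n} γ_n > −∞. The following are equivalent: (i) {γ_n} is CPD, sup_n (γ_{n+1} − γ_n) < ∞, and the measure ν in the representing triplet of γ satisfies supp ν ⊆ [0,∞); (ii) there exist a finite Borel measure ν on ℝ and d ∈ ℝ such that ν(ℝ∖[0,1)) = 0, the function x ↦ 1/(1−x) is ν-integrable, and γ_n = γ_0 + n·d − ∫_{[0,1)} (1−xⁿ)/(1−x)² dν(x) for all n ∈ ℤ₊. Moreover: if (i) holds and (b, c, ν) represents γ, then c = 0, x ↦ 1/(1−x) is ν-integrable, and the pair (d, ν) with d = b + ∫_{[0,1)} 1/(1−x) dν(x) is the unique pair satisfying (ii); if (ii) holds, then d ≥ 0, the sequence (Δγ)_n = γ_{n+1} − γ_n is monotonically increasing with limit d, and (b, 0, ν) with b = d − ∫_{[0,1)} 1/(1−x) dν(x) is the representing triplet of γ. -/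

import Mathlib

/-!
For `x ≠ 1`, `Q_n(x) = n/(1-x) - (1-xⁿ)/(1-x)²`, so the two representations of `γ` are the same
formula, with `d = b + ∫ 1/(1-x) dν`, as soon as `ν` lives on `[0, 1)` and `1/(1-x)` is
`ν`-integrable.

Given (i), `(Δγ)_n = b + c(2n+1) + ∫ ∑_{j<n} xʲ dν` with a nonnegative integrand, because `ν`
lives on `[0, ∞)`. A bound on `Δγ` therefore forces `c = 0` and `ν((1, ∞)) = 0`, and, since the
partial sums increase to `1/(1-x)` on `[0, 1)`, the integrability of `1/(1-x)`.

Given (ii), `(Δγ)_n = d - ∫ xⁿ/(1-x) dν` increases to `d`, and `d ≥ 0` because `γ` is bounded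
below. The differences of `Δγ` are the moments of `ν`, which determine `ν` on `[0, 1]`; this is
the uniqueness. Finally, when `∑ λᵢ = 0` the affine part `γ₀ + n d` drops out of the Hankel form
of `γ`, which becomes `∫ |∑ λᵢ xⁱ|² / (1-x)² dν ≥ 0`.
-/

open MeasureTheory Filter Topology
open scoped ComplexOrder

noncomputable section

/-- A real sequence `γ` is *conditionally positive definite* (CPD) if
`∑_{i,j=0}^k γ_{i+j} λ_i conj(λ_j) ≥ 0` for all finite sequences `λ_0, …, λ_k` of complex
numbers with `∑_{i=0}^k λ_i = 0`. -/
def IsCPDSeq (γ : ℕ → ℝ) : Prop :=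
  ∀ (k : ℕ) (l : ℕ → ℂ), ∑ i ∈ Finset.range (k + 1), l i = 0 →
    0 ≤ ∑ i ∈ Finset.range (k + 1), ∑ j ∈ Finset.range (k + 1),
        (γ (i + j) : ℂ) * l i * (starRingEnd ℂ) (l j)

/-- A real sequence `γ` is *positive definite* (PD) if
`∑_{i,j=0}^k γ_{i+j} λ_i conj(λ_j) ≥ 0` for all finite sequences `λ_0, …, λ_k ∈ ℂ`. -/
def IsPDSeq (γ : ℕ → ℝ) : Prop :=
  ∀ (k : ℕ) (l : ℕ → ℂ),
    0 ≤ ∑ i ∈ Finset.range (k + 1), ∑ j ∈ Finset.range (k + 1),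
        (γ (i + j) : ℂ) * l i * (starRingEnd ℂ) (l j)

/-- The polynomial `Q_n`: `Q_n(x) = 0` for `n = 0, 1` and
`Q_n(x) = ∑_{j=0}^{n-2} (n - j - 1) x^j` for `n ≥ 2`. -/
def Qpoly (n : ℕ) (x : ℝ) : ℝ :=
  ∑ j ∈ Finset.range (n - 1), ((n : ℝ) - (j : ℝ) - 1) * x ^ j

/-- `(b, c, ν)` is a representing triplet of the sequence `γ`: `b ∈ ℝ`, `c ≥ 0`, `ν` a finite
compactly supported Borel measure on `ℝ` with `ν({1}) = 0`, and
`γ_n = γ_0 + b n + c n² + ∫ Q_n dν` for all `n`. -/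
def IsRepTriplet (γ : ℕ → ℝ) (b c : ℝ) (ν : Measure ℝ) : Prop :=
  0 ≤ c ∧ IsFiniteMeasure ν ∧ (∃ K : Set ℝ, IsCompact K ∧ ν Kᶜ = 0) ∧
    ν ({1} : Set ℝ) = 0 ∧
    ∀ n : ℕ, γ n = γ 0 + b * n + c * (n : ℝ) ^ 2 + ∫ x, Qpoly n x ∂ν

/-- The sequence `n ↦ |γ_n|^{1/n}`. -/
def rootSeq (γ : ℕ → ℝ) : ℕ → ℝ := fun n => |γ n| ^ ((1 : ℝ) / n)

/-- `limsup_{n → ∞} |γ_n|^{1/n} < ∞`, i.e. the sequence `|γ_n|^{1/n}` is (eventually)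
bounded above. -/
def FiniteExpGrowth (γ : ℕ → ℝ) : Prop :=
  IsBoundedUnder (· ≤ ·) atTop (rootSeq γ)

/-- `limsup_{n → ∞} |γ_n|^{1/n}` (as a real number). -/
def limsupRoot (γ : ℕ → ℝ) : ℝ := limsup (rootSeq γ) atTop

/-- The closed support of a Borel measure on `ℝ`: the set of points all of whose open
neighbourhoods have nonzero measure. -/
def measSupport (ν : Measure ℝ) : Set ℝ :=
  {x : ℝ | ∀ U : Set ℝ, IsOpen U → x ∈ U → ν U ≠ 0}

/-- The difference transformation `Δ`, `(Δγ)_n = γ_{n+1} - γ_n`. -/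
def deltaSeq (γ : ℕ → ℝ) : ℕ → ℝ := fun n => γ (n + 1) - γ n

/-- The pair `(ν, d)` satisfies condition (ii) of Theorem `boundiff-scalar2` for `γ`:
`ν` is a finite Borel measure with `ν(ℝ \ [0,1)) = 0`, `1/(1-x) ∈ L¹(ν)` and
`γ_n = γ_0 + n d - ∫_{[0,1)} (1-xⁿ)/(1-x)² dν` for all `n`. -/
def GoodPairIco (γ : ℕ → ℝ) (ν : Measure ℝ) (d : ℝ) : Prop :=
  IsFiniteMeasure ν ∧ ν ((Set.Ico (0 : ℝ) 1)ᶜ) = 0 ∧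
    Integrable (fun x : ℝ => (1 - x)⁻¹) ν ∧
    ∀ n : ℕ, γ n = γ 0 + n * d - ∫ x in Set.Ico (0 : ℝ) 1, (1 - x ^ n) / (1 - x) ^ 2 ∂ν

open Finset in
lemma Qpoly_succ (n : ℕ) (x : ℝ) :
    Qpoly (n + 1) x = Qpoly n x + ∑ j ∈ range n, x ^ j := by
  rcases n with _ | n
  · simp [Qpoly]
  · simp only [Qpoly, Nat.add_sub_cancel, sum_range_succ _ n]
    rw [← add_assoc, ← sum_add_distrib]
    push_cast
    congr 1
    · exact sum_congr rfl fun j _ => by ring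
    · ring

lemma Qpoly_mul_one_sub_sq (n : ℕ) (x : ℝ) :
    Qpoly n x * (1 - x) ^ 2 = n * (1 - x) - (1 - x ^ n) := by
  induction n with
  | zero => simp [Qpoly]
  | succ n ih =>
    rw [Qpoly_succ]
    push_cast
    linear_combination ih - (1 - x) * geom_sum_mul x n

lemma Qpoly_eq_of_ne_one (n : ℕ) {x : ℝ} (hx : x ≠ 1) :
    Qpoly n x = n * (1 - x)⁻¹ - (1 - x ^ n) / (1 - x) ^ 2 := by
  have : 1 - x ≠ 0 := sub_ne_zero.2 hx.symm
  field_simp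
  linear_combination Qpoly_mul_one_sub_sq n x

lemma nonpos_of_forall_nat_mul_le {K : Type*} [Field K] [LinearOrder K] [IsStrictOrderedRing K]
    [Archimedean K] {a C : K} (h : ∀ n : ℕ, n * a ≤ C) : a ≤ 0 := by
  by_contra! ha
  obtain ⟨n, hn⟩ := exists_nat_gt (C / a)
  linarith [h n, (div_lt_iff₀ ha).1 hn]

lemma Continuous.integrable_of_ae_mem_isCompact {X E : Type*} [TopologicalSpace X] [T2Space X]
    [MeasurableSpace X] [OpensMeasurableSpace X] [NormedAddCommGroup E] {μ : Measure X}
    [IsFiniteMeasure μ] {K : Set X} (hK : IsCompact K) (hμ : ∀ᵐ x ∂μ, x ∈ K) {f : X → E}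
    (hf : Continuous f) : Integrable f μ := by
  rw [← Measure.restrict_eq_self_of_ae_mem hμ]
  exact hf.continuousOn.integrableOn_compact hK

lemma measSupport_eq_support (ν : Measure ℝ) : measSupport ν = ν.support := by
  ext x
  simp only [measSupport, Measure.support_eq_forall_isOpen, Set.mem_ofPred_eq, pos_iff_ne_zero]
  exact ⟨fun h U hxU hU => h U hU hxU, fun h U hU hxU => h U hxU hU⟩

lemma ae_mem_of_measSupport_subset {ν : Measure ℝ} {s : Set ℝ} (h : measSupport ν ⊆ s) :
    ∀ᵐ x ∂ν, x ∈ s :=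
  Filter.mem_of_superset Measure.support_mem_ae ((measSupport_eq_support ν).symm.subset.trans h)

section Moments

variable {μ μ' : Measure ℝ} {a b : ℝ}

lemma integral_eval_eq_sum_moments [IsFiniteMeasure μ] (hμ : ∀ᵐ x ∂μ, x ∈ Set.Icc a b)
    (p : Polynomial ℝ) :
    ∫ x, p.eval x ∂μ = ∑ i ∈ Finset.range (p.natDegree + 1), p.coeff i * ∫ x, x ^ i ∂μ := by
  simp_rw [Polynomial.eval_eq_sum_range]
  rw [integral_finsetSum _ fun i _ =>
    ((continuous_pow i).integrable_of_ae_mem_isCompact isCompact_Icc hμ).const_mul _]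
  simp_rw [integral_const_mul]

lemma dist_integral_le_of_ae_dist_le {X E : Type*} [MeasurableSpace X] [NormedAddCommGroup E]
    [NormedSpace ℝ E] {κ : Measure X} [IsFiniteMeasure κ] {f g : X → E} (hf : Integrable f κ)
    (hg : Integrable g κ) {δ : ℝ} (h : ∀ᵐ x ∂κ, dist (f x) (g x) ≤ δ) :
    dist (∫ x, f x ∂κ) (∫ x, g x ∂κ) ≤ δ * κ.real Set.univ := by
  rw [dist_eq_norm, ← integral_sub hf hg]
  exact norm_integral_le_of_norm_le_const (h.mono fun x hx => by rwa [← dist_eq_norm])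

/-- Uniqueness in the Hausdorff moment problem, by Weierstrass approximation. -/
theorem Measure.ext_of_integral_pow_eq [IsFiniteMeasure μ] [IsFiniteMeasure μ']
    (hμ : ∀ᵐ x ∂μ, x ∈ Set.Icc a b) (hμ' : ∀ᵐ x ∂μ', x ∈ Set.Icc a b)
    (h : ∀ n : ℕ, ∫ x, x ^ n ∂μ = ∫ x, x ^ n ∂μ') : μ = μ' := by
  refine ext_of_forall_integral_eq_of_IsFiniteMeasure fun f => eq_of_forall_dist_le fun ε hε => ?_
  set m := μ.real Set.univ + μ'.real Set.univ
  have hm : 0 ≤ m := by positivity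
  obtain ⟨p, hp⟩ := exists_polynomial_near_of_continuousOn a b f f.continuous.continuousOn
    (ε / (m + 1)) (by positivity)
  have approx : ∀ κ : Measure ℝ, [IsFiniteMeasure κ] → (∀ᵐ x ∂κ, x ∈ Set.Icc a b) →
      dist (∫ x, f x ∂κ) (∫ x, p.eval x ∂κ) ≤ ε / (m + 1) * κ.real Set.univ :=
    fun κ _ hκ => dist_integral_le_of_ae_dist_le
      (f.continuous.integrable_of_ae_mem_isCompact isCompact_Icc hκ)
      (p.continuous.integrable_of_ae_mem_isCompact isCompact_Icc hκ)
      (hκ.mono fun x hx => by rw [Real.dist_eq, abs_sub_comm]; exact (hp x hx).le)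
  have hpoly : ∫ x, p.eval x ∂μ = ∫ x, p.eval x ∂μ' := by
    simp only [integral_eval_eq_sum_moments hμ, integral_eval_eq_sum_moments hμ', h]
  calc dist (∫ x, f x ∂μ) (∫ x, f x ∂μ')
      ≤ dist (∫ x, f x ∂μ) (∫ x, p.eval x ∂μ) + dist (∫ x, f x ∂μ') (∫ x, p.eval x ∂μ') := by
        rw [← hpoly, dist_comm (∫ x, f x ∂μ')]; exact dist_triangle _ _ _
    _ ≤ ε / (m + 1) * μ.real Set.univ + ε / (m + 1) * μ'.real Set.univ :=
        add_le_add (approx μ hμ) (approx μ' hμ')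
    _ = ε * (m / (m + 1)) := by ring
    _ ≤ ε := mul_le_of_le_one_right hε.le ((div_le_one (by positivity)).2 (by linarith))

end Moments

lemma one_sub_pow_div_sq_eq (n : ℕ) {x : ℝ} (hx : x ≠ 1) :
    (1 - x ^ n) / (1 - x) ^ 2 = (∑ j ∈ Finset.range n, x ^ j) * (1 - x)⁻¹ := by
  have : 1 - x ≠ 0 := sub_ne_zero.2 hx.symm
  rw [show 1 - x ^ n = (∑ j ∈ Finset.range n, x ^ j) * (1 - x) by
    linear_combination geom_sum_mul x n]
  field_simp

lemma geom_sum_le_of_mem_Icc (n : ℕ) {x : ℝ} (hx : x ∈ Set.Icc (0 : ℝ) 1) :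
    ∑ j ∈ Finset.range n, x ^ j ≤ n := by
  simpa using Finset.sum_le_sum fun j (_ : j ∈ Finset.range n) => pow_le_one₀ hx.1 hx.2

lemma integral_geom_sum_nonneg {ν : Measure ℝ} (hν : ∀ᵐ x ∂ν, 0 ≤ x) (n : ℕ) :
    0 ≤ ∫ x, ∑ j ∈ Finset.range n, x ^ j ∂ν :=
  integral_nonneg_of_ae <| hν.mono fun _ hx => Finset.sum_nonneg fun j _ => pow_nonneg hx j

lemma norm_pow_mul_inv_one_sub_le (n : ℕ) {x : ℝ} (hx : x ∈ Set.Ico (0 : ℝ) 1) :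
    ‖x ^ n * (1 - x)⁻¹‖ ≤ (1 - x)⁻¹ := by
  have h1x : 0 ≤ (1 - x)⁻¹ := inv_nonneg.2 (by linarith [hx.2])
  rw [norm_mul, norm_pow, Real.norm_of_nonneg hx.1, Real.norm_of_nonneg h1x]
  exact mul_le_of_le_one_left h1x (pow_le_one₀ hx.1 hx.2.le)

section IcoMeasure

variable {ν : Measure ℝ} (hν : ∀ᵐ x ∂ν, x ∈ Set.Ico (0 : ℝ) 1)
  (hint : Integrable (fun x : ℝ => (1 - x)⁻¹) ν)
include hν hint

lemma integrable_pow_mul_inv_one_sub (n : ℕ) : Integrable (fun x : ℝ => x ^ n * (1 - x)⁻¹) ν :=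
  hint.mono' (by fun_prop) (hν.mono fun _ hx => norm_pow_mul_inv_one_sub_le n hx)

lemma integrable_one_sub_pow_div_sq (n : ℕ) :
    Integrable (fun x : ℝ => (1 - x ^ n) / (1 - x) ^ 2) ν := by
  refine (hint.const_mul n).mono' (Measurable.aestronglyMeasurable (by fun_prop))
    (hν.mono fun x hx => ?_)
  have h1x : 0 ≤ (1 - x)⁻¹ := inv_nonneg.2 (by linarith [hx.2])
  rw [one_sub_pow_div_sq_eq n hx.2.ne, norm_mul, Real.norm_of_nonneg h1x,
    Real.norm_of_nonneg (Finset.sum_nonneg fun j _ => pow_nonneg hx.1 j)]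
  exact mul_le_mul_of_nonneg_right (geom_sum_le_of_mem_Icc n ⟨hx.1, hx.2.le⟩) h1x

lemma integral_Qpoly_eq (n : ℕ) :
    ∫ x, Qpoly n x ∂ν = n * ∫ x, (1 - x)⁻¹ ∂ν - ∫ x, (1 - x ^ n) / (1 - x) ^ 2 ∂ν := by
  rw [integral_congr_ae (hν.mono fun x hx => Qpoly_eq_of_ne_one n hx.2.ne),
    integral_sub (hint.const_mul _) (integrable_one_sub_pow_div_sq hν hint n), integral_const_mul]

lemma integral_pow_mul_inv_one_sub_eq (n : ℕ) :
    ∫ x, x ^ n * (1 - x)⁻¹ ∂ν =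
      ∫ x, (1 - x ^ (n + 1)) / (1 - x) ^ 2 ∂ν - ∫ x, (1 - x ^ n) / (1 - x) ^ 2 ∂ν := by
  rw [← integral_sub (integrable_one_sub_pow_div_sq hν hint _)
    (integrable_one_sub_pow_div_sq hν hint _)]
  refine integral_congr_ae (hν.mono fun x hx => ?_)
  have : 1 - x ≠ 0 := sub_ne_zero.2 hx.2.ne'
  field_simp
  ring

lemma integral_pow_eq_sub (n : ℕ) :
    ∫ x, x ^ n ∂ν = ∫ x, x ^ n * (1 - x)⁻¹ ∂ν - ∫ x, x ^ (n + 1) * (1 - x)⁻¹ ∂ν := by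
  rw [← integral_sub (integrable_pow_mul_inv_one_sub hν hint _)
    (integrable_pow_mul_inv_one_sub hν hint _)]
  refine integral_congr_ae (hν.mono fun x hx => ?_)
  have : 1 - x ≠ 0 := sub_ne_zero.2 hx.2.ne'
  field_simp
  ring

lemma tendsto_integral_pow_mul_inv_one_sub :
    Tendsto (fun n : ℕ => ∫ x, x ^ n * (1 - x)⁻¹ ∂ν) atTop (𝓝 0) := by
  have hlim := tendsto_integral_of_dominated_convergence (fun x : ℝ => (1 - x)⁻¹)
    (F := fun (n : ℕ) (x : ℝ) => x ^ n * (1 - x)⁻¹) (f := fun _ => 0)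
    (fun n => (integrable_pow_mul_inv_one_sub hν hint n).aestronglyMeasurable) hint
    (fun n => hν.mono fun _ hx => norm_pow_mul_inv_one_sub_le n hx)
    (hν.mono fun x hx => by
      simpa using (tendsto_pow_atTop_nhds_zero_of_lt_one hx.1 hx.2).mul_const (1 - x)⁻¹)
  simpa using hlim

end IcoMeasure

section HankelForm

open Finset ComplexConjugate

def hankelForm (γ : ℕ → ℝ) (s : Finset ℕ) (l : ℕ → ℂ) : ℂ :=
  ∑ i ∈ s, ∑ j ∈ s, (γ (i + j) : ℂ) * l i * conj (l j)

lemma isCPDSeq_iff_hankelForm (γ : ℕ → ℝ) :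
    IsCPDSeq γ ↔ ∀ (k : ℕ) (l : ℕ → ℂ), ∑ i ∈ range (k + 1), l i = 0 →
      0 ≤ hankelForm γ (range (k + 1)) l := Iff.rfl

lemma hankelForm_add (γ₁ γ₂ : ℕ → ℝ) (s : Finset ℕ) (l : ℕ → ℂ) :
    hankelForm (γ₁ + γ₂) s l = hankelForm γ₁ s l + hankelForm γ₂ s l := by
  simp only [hankelForm, ← sum_add_distrib, Pi.add_apply]
  push_cast
  simp only [add_mul]

lemma hankelForm_affine {s : Finset ℕ} {l : ℕ → ℂ} (hl : ∑ i ∈ s, l i = 0) (α β : ℝ) :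
    hankelForm (fun n => α + β * n) s l = 0 := by
  have hl' : ∑ j ∈ s, conj (l j) = 0 := by rw [← map_sum, hl, map_zero]
  have hsplit : ∀ i j, ((α + β * (i + j : ℕ) : ℝ) : ℂ) * l i * conj (l j) =
      α * (l i * conj (l j)) + β * ((i * l i) * conj (l j)) + β * (l i * (j * conj (l j))) := by
    intro i j
    push_cast
    ring
  simp only [hankelForm, hsplit, sum_add_distrib, ← mul_sum, ← sum_mul, hl, hl']
  ring

lemma hankelForm_integral {ν : Measure ℝ} {φ : ℕ → ℝ → ℝ} (hφ : ∀ n, Integrable (φ n) ν)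
    (s : Finset ℕ) (l : ℕ → ℂ) :
    hankelForm (fun n => ∫ x, φ n x ∂ν) s l = ∫ x, hankelForm (fun n => φ n x) s l ∂ν := by
  have hterm : ∀ i j, Integrable (fun x => (φ (i + j) x : ℂ) * l i * conj (l j)) ν :=
    fun i j => ((hφ (i + j)).ofReal.mul_const _).mul_const _
  simp only [hankelForm]
  rw [integral_finsetSum _ fun i _ => integrable_finsetSum _ fun j _ => hterm i j]
  refine sum_congr rfl fun i _ => ?_
  rw [integral_finsetSum _ fun j _ => hterm i j]
  refine sum_congr rfl fun j _ => ?_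
  rw [integral_mul_const, integral_mul_const, integral_complex_ofReal]

lemma hankelForm_neg_one_sub_pow_div_sq {s : Finset ℕ} {l : ℕ → ℂ} (hl : ∑ i ∈ s, l i = 0)
    (x : ℝ) :
    hankelForm (fun n => -((1 - x ^ n) / (1 - x) ^ 2)) s l =
      (Complex.normSq (∑ i ∈ s, l i * x ^ i) / (1 - x) ^ 2 : ℝ) := by
  have hl' : ∑ j ∈ s, conj (l j) = 0 := by rw [← map_sum, hl, map_zero]
  have hsplit : ∀ i j, ((-((1 - x ^ (i + j)) / (1 - x) ^ 2) : ℝ) : ℂ) * l i * conj (l j) =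
      ((1 - x) ^ 2 : ℂ)⁻¹ * ((l i * x ^ i) * conj (l j * x ^ j)) -
        ((1 - x) ^ 2 : ℂ)⁻¹ * (l i * conj (l j)) := by
    intro i j
    simp only [map_mul, map_pow, Complex.conj_ofReal]
    push_cast
    ring
  simp only [hankelForm, hsplit, sum_sub_distrib, ← mul_sum, ← sum_mul, ← map_sum, hl, hl',
    Complex.mul_conj]
  push_cast
  ring

end HankelForm

namespace GoodPairIco

variable {γ : ℕ → ℝ} {ν : Measure ℝ} {d : ℝ} (h : GoodPairIco γ ν d)
include h

lemma ae_mem_Ico : ∀ᵐ x ∂ν, x ∈ Set.Ico (0 : ℝ) 1 := mem_ae_iff.2 h.2.1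

lemma eq_integral (n : ℕ) : γ n = γ 0 + n * d - ∫ x, (1 - x ^ n) / (1 - x) ^ 2 ∂ν := by
  rw [h.2.2.2 n, Measure.restrict_eq_self_of_ae_mem h.ae_mem_Ico]

lemma deltaSeq_eq (n : ℕ) : deltaSeq γ n = d - ∫ x, x ^ n * (1 - x)⁻¹ ∂ν := by
  rw [deltaSeq, h.eq_integral (n + 1), h.eq_integral n,
    integral_pow_mul_inv_one_sub_eq h.ae_mem_Ico h.2.2.1]
  push_cast
  ring

lemma deltaSeq_le (n : ℕ) : deltaSeq γ n ≤ d := by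
  rw [h.deltaSeq_eq]
  exact sub_le_self _ <| integral_nonneg_of_ae <| h.ae_mem_Ico.mono fun x hx =>
    mul_nonneg (pow_nonneg hx.1 n) (inv_nonneg.2 (by linarith [hx.2]))

lemma integral_pow_eq (n : ℕ) : ∫ x, x ^ n ∂ν = deltaSeq γ (n + 1) - deltaSeq γ n := by
  rw [h.deltaSeq_eq, h.deltaSeq_eq, integral_pow_eq_sub h.ae_mem_Ico h.2.2.1]
  ring

lemma monotone_deltaSeq : Monotone (deltaSeq γ) := by
  refine monotone_nat_of_le_succ fun n => ?_
  have : 0 ≤ ∫ x, x ^ n ∂ν :=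
    integral_nonneg_of_ae <| h.ae_mem_Ico.mono fun x hx => pow_nonneg hx.1 n
  linarith [h.integral_pow_eq n]

lemma tendsto_deltaSeq : Tendsto (deltaSeq γ) atTop (𝓝 d) := by
  have := (tendsto_integral_pow_mul_inv_one_sub h.ae_mem_Ico h.2.2.1).const_sub d
  rw [sub_zero] at this
  exact this.congr fun n => (h.deltaSeq_eq n).symm

lemma nonneg_of_bddBelow (hbdd : BddBelow (Set.range γ)) : 0 ≤ d := by
  obtain ⟨L, hL⟩ := hbdd
  have hg : ∀ n : ℕ, 0 ≤ ∫ x, (1 - x ^ n) / (1 - x) ^ 2 ∂ν := fun n =>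
    integral_nonneg_of_ae <| h.ae_mem_Ico.mono fun x hx =>
      div_nonneg (by linarith [pow_le_one₀ (n := n) hx.1 hx.2.le]) (sq_nonneg _)
  have : -d ≤ 0 := nonpos_of_forall_nat_mul_le (C := γ 0 - L) fun n => by
    linarith [hL ⟨n, rfl⟩, h.eq_integral n, hg n]
  linarith

lemma isRepTriplet : IsRepTriplet γ (d - ∫ x in Set.Ico (0 : ℝ) 1, (1 - x)⁻¹ ∂ν) 0 ν := by
  have hIcc : ∀ᵐ x ∂ν, x ∈ Set.Icc (0 : ℝ) 1 := h.ae_mem_Ico.mono fun x hx => ⟨hx.1, hx.2.le⟩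
  have hne : ∀ᵐ x ∂ν, x ∉ ({1} : Set ℝ) := h.ae_mem_Ico.mono fun x hx => hx.2.ne
  refine ⟨le_rfl, h.1, ⟨_, isCompact_Icc, hIcc⟩, measure_eq_zero_iff_ae_notMem.2 hne, fun n => ?_⟩
  rw [integral_Qpoly_eq h.ae_mem_Ico h.2.2.1, Measure.restrict_eq_self_of_ae_mem h.ae_mem_Ico,
    h.eq_integral]
  ring

lemma measSupport_subset : measSupport ν ⊆ Set.Ici 0 := by
  rw [measSupport_eq_support]
  exact Measure.support_subset_of_isClosed isClosed_Ici (h.ae_mem_Ico.mono fun x hx => hx.1)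

lemma isCPDSeq : IsCPDSeq γ := by
  rw [isCPDSeq_iff_hankelForm]
  intro k l hl
  have hγ : γ = (fun n : ℕ => γ 0 + d * n) + fun n => ∫ x, -((1 - x ^ n) / (1 - x) ^ 2) ∂ν := by
    ext n
    rw [Pi.add_apply, integral_neg, h.eq_integral n]
    ring
  rw [hγ, hankelForm_add, hankelForm_affine hl, zero_add,
    hankelForm_integral (φ := fun n x => -((1 - x ^ n) / (1 - x) ^ 2))
      fun n => (integrable_one_sub_pow_div_sq h.ae_mem_Ico h.2.2.1 n).neg]
  simp only [hankelForm_neg_one_sub_pow_div_sq hl, integral_complex_ofReal, Complex.zero_le_real]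
  exact integral_nonneg fun x => div_nonneg (Complex.normSq_nonneg _) (sq_nonneg _)

lemma unique {ν' : Measure ℝ} {d' : ℝ} (h' : GoodPairIco γ ν' d') : ν = ν' ∧ d = d' := by
  have := h.1
  have := h'.1
  have hν : ν = ν' := Measure.ext_of_integral_pow_eq
    (h.ae_mem_Ico.mono fun x hx => ⟨hx.1, hx.2.le⟩)
    (h'.ae_mem_Ico.mono fun x hx => ⟨hx.1, hx.2.le⟩)
    fun n => by rw [h.integral_pow_eq, h'.integral_pow_eq]
  subst hν
  refine ⟨rfl, ?_⟩
  linarith [h.eq_integral 1, h'.eq_integral 1]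

end GoodPairIco

namespace IsRepTriplet

variable {γ : ℕ → ℝ} {b c : ℝ} {ν : Measure ℝ} (ht : IsRepTriplet γ b c ν)
include ht

lemma integrable_of_continuous {f : ℝ → ℝ} (hf : Continuous f) : Integrable f ν := by
  obtain ⟨-, hfin, ⟨K, hK, hKc⟩, -⟩ := ht
  exact hf.integrable_of_ae_mem_isCompact hK (mem_ae_iff.2 hKc)

lemma deltaSeq_eq (n : ℕ) :
    deltaSeq γ n = b + c * (2 * n + 1) + ∫ x, ∑ j ∈ Finset.range n, x ^ j ∂ν := by
  have hQ : ∫ x, Qpoly (n + 1) x ∂ν = ∫ x, Qpoly n x ∂ν + ∫ x, ∑ j ∈ Finset.range n, x ^ j ∂ν := by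
    simp only [Qpoly_succ]
    exact integral_add (ht.integrable_of_continuous (by unfold Qpoly; fun_prop))
      (ht.integrable_of_continuous (by fun_prop))
  rw [deltaSeq, ht.2.2.2.2 (n + 1), ht.2.2.2.2 n, hQ]
  push_cast
  ring

variable (hsupp : measSupport ν ⊆ Set.Ici 0) {M : ℝ} (hM : ∀ n, deltaSeq γ n ≤ M)
include hsupp hM

lemma c_eq_zero : c = 0 := by
  refine le_antisymm (nonpos_of_forall_nat_mul_le (C := M - b) fun n => ?_) ht.1
  nlinarith [ht.deltaSeq_eq n, hM n, ht.1,
    integral_geom_sum_nonneg (ae_mem_of_measSupport_subset hsupp) n]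

lemma integral_geom_sum_le (n : ℕ) : ∫ x, ∑ j ∈ Finset.range n, x ^ j ∂ν ≤ M - b := by
  have h := ht.deltaSeq_eq n
  rw [ht.c_eq_zero hsupp hM, zero_mul, add_zero] at h
  linarith [hM n]

/-- On `(1, ∞)` the geometric sums grow like `n`, while their integrals stay bounded. -/
lemma measure_Ioi_one : ν (Set.Ioi 1) = 0 := by
  have := ht.2.1
  have hbound : ∀ n : ℕ, n * ν.real (Set.Ioi 1) ≤ M - b := fun n => by
    refine le_trans ?_ (ht.integral_geom_sum_le hsupp hM n)
    rw [mul_comm, ← smul_eq_mul, ← integral_indicator_const _ measurableSet_Ioi]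
    refine integral_mono_of_nonneg (Eventually.of_forall fun x => ?_)
      (ht.integrable_of_continuous (by fun_prop))
      ((ae_mem_of_measSupport_subset hsupp).mono fun x (hx : 0 ≤ x) => ?_)
    · exact Set.indicator_nonneg (fun _ _ => Nat.cast_nonneg n) x
    · by_cases h1 : x ∈ Set.Ioi 1
      · rw [Set.indicator_of_mem h1]
        simpa using Finset.sum_le_sum fun j (_ : j ∈ Finset.range n) => one_le_pow₀ h1.out.le
      · rw [Set.indicator_of_notMem h1]
        exact Finset.sum_nonneg fun j _ => pow_nonneg hx j
  rw [← measureReal_eq_zero_iff]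
  exact le_antisymm (nonpos_of_forall_nat_mul_le hbound) measureReal_nonneg

lemma ae_mem_Ico : ∀ᵐ x ∂ν, x ∈ Set.Ico (0 : ℝ) 1 := by
  filter_upwards [ae_mem_of_measSupport_subset hsupp,
    measure_eq_zero_iff_ae_notMem.1 ht.2.2.2.1,
    measure_eq_zero_iff_ae_notMem.1 (ht.measure_Ioi_one hsupp hM)] with x h0 h1 h2
  exact ⟨h0, lt_of_le_of_ne (not_lt.1 h2) h1⟩

lemma integrable_inv_one_sub : Integrable (fun x : ℝ => (1 - x)⁻¹) ν := by
  have hIco := ht.ae_mem_Ico hsupp hM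
  refine integrable_of_tendsto (G := fun n x => ∑ j ∈ Finset.range n, x ^ j)
    (hIco.mono fun x hx => (hasSum_geometric_of_lt_one hx.1 hx.2).tendsto_sum_nat)
    (fun n => (Continuous.aestronglyMeasurable (by fun_prop))) ?_
  refine ne_top_of_le_ne_top (ENNReal.ofReal_ne_top (r := M - b))
    (liminf_le_of_frequently_le' (Frequently.of_forall fun n => ?_))
  have hnonneg : ∀ᵐ x ∂ν, 0 ≤ ∑ j ∈ Finset.range n, x ^ j :=
    hIco.mono fun x hx => Finset.sum_nonneg fun j _ => pow_nonneg hx.1 j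
  rw [lintegral_congr_ae (hnonneg.mono fun x hx => Real.enorm_of_nonneg hx),
    ← ofReal_integral_eq_lintegral_ofReal (ht.integrable_of_continuous (by fun_prop)) hnonneg]
  exact ENNReal.ofReal_le_ofReal (ht.integral_geom_sum_le hsupp hM n)

lemma goodPairIco : GoodPairIco γ ν (b + ∫ x in Set.Ico (0 : ℝ) 1, (1 - x)⁻¹ ∂ν) := by
  have hIco := ht.ae_mem_Ico hsupp hM
  have hint := ht.integrable_inv_one_sub hsupp hM
  refine ⟨ht.2.1, mem_ae_iff.1 hIco, hint, fun n => ?_⟩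
  rw [Measure.restrict_eq_self_of_ae_mem hIco, ht.2.2.2.2 n, ht.c_eq_zero hsupp hM,
    integral_Qpoly_eq hIco hint]
  ring

end IsRepTriplet

/-- Theorem `boundiff-scalar2`: suppose `inf_n γ_n > -∞`.  Then `γ` is CPD with
`sup_n (Δγ)_n < ∞` and representing measure supported in `[0, ∞)` iff there is a pair `(ν, d)`
as in `GoodPairIco`.  Moreover: if (i) holds with representing triplet `(b, c, ν)`, then
`c = 0`, `1/(1-x) ∈ L¹(ν)` and `(d, ν)` with `d = b + ∫_{[0,1)} 1/(1-x) dν` is the unique pair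
satisfying (ii); if (ii) holds, then `d ≥ 0`, `Δγ` is monotonically increasing to `d`, and
`(b, 0, ν)` with `b = d - ∫_{[0,1)} 1/(1-x) dν` represents `γ`. -/
theorem cpd_with_bounded_differences (γ : ℕ → ℝ) (hbdd : BddBelow (Set.range γ)) :
    ((IsCPDSeq γ ∧ BddAbove (Set.range (deltaSeq γ)) ∧
        ∃ (b c : ℝ) (ν : Measure ℝ), IsRepTriplet γ b c ν ∧ measSupport ν ⊆ Set.Ici 0) ↔
      ∃ (ν : Measure ℝ) (d : ℝ), GoodPairIco γ ν d) ∧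
    (∀ (b c : ℝ) (ν : Measure ℝ), IsCPDSeq γ → BddAbove (Set.range (deltaSeq γ)) →
      IsRepTriplet γ b c ν → measSupport ν ⊆ Set.Ici 0 →
      c = 0 ∧ Integrable (fun x : ℝ => (1 - x)⁻¹) ν ∧
      GoodPairIco γ ν (b + ∫ x in Set.Ico (0 : ℝ) 1, (1 - x)⁻¹ ∂ν) ∧
      (∀ (ν' : Measure ℝ) (d' : ℝ), GoodPairIco γ ν' d' →
        ν' = ν ∧ d' = b + ∫ x in Set.Ico (0 : ℝ) 1, (1 - x)⁻¹ ∂ν)) ∧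
    (∀ (ν : Measure ℝ) (d : ℝ), GoodPairIco γ ν d →
      0 ≤ d ∧ Monotone (deltaSeq γ) ∧ Tendsto (deltaSeq γ) atTop (𝓝 d) ∧
      IsRepTriplet γ (d - ∫ x in Set.Ico (0 : ℝ) 1, (1 - x)⁻¹ ∂ν) 0 ν) := by
  refine ⟨⟨fun ⟨_, ⟨M, hM⟩, b, c, ν, ht, hsupp⟩ =>
        ⟨ν, _, ht.goodPairIco hsupp (Set.forall_mem_range.1 hM)⟩,
      fun ⟨ν, d, h⟩ => ⟨h.isCPDSeq, ⟨d, Set.forall_mem_range.2 h.deltaSeq_le⟩,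
        _, 0, ν, h.isRepTriplet, h.measSupport_subset⟩⟩,
    fun b c ν _ ⟨M, hM⟩ ht hsupp => ?_,
    fun ν d h => ⟨h.nonneg_of_bddBelow hbdd, h.monotone_deltaSeq, h.tendsto_deltaSeq,
      h.isRepTriplet⟩⟩
  rw [mem_upperBounds, Set.forall_mem_range] at hM
  have h := ht.goodPairIco hsupp hM
  exact ⟨ht.c_eq_zero hsupp hM, ht.integrable_inv_one_sub hsupp hM, h,
    fun ν' d' h' => h'.unique h⟩
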